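/- arXiv:2504.18188 — 5 statements merged into one kernel-verified Lean document; each statement's English description precedes it below -/
import Mathlib

section
/- Let π be a permutation of a finite set X and let (x₁, y₁), ..., (x_k, y_k) be disjoint pairs (the x_i are pairwise distinct and the y_i are pairwise distinct). Then for any permutation σ of {1, ..., k}, the iterated reprogramming is order-independent: π[x₁ → y₁]...[x_k → y_k] = π[x_{σ(1)} → y_{σ(1)}]...[x_{σ(k)} → y_{σ(k)}]. -/
open Equiv Finset
open scoped Classical

variable {X : Type*} [DecidableEq X] [Fintype X]

/-- Pointwise definition of the reprogrammed function `π[x → y]`. -/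
def reprogFun (π : Equiv.Perm X) (x y : X) (z : X) : X :=
  if z = x then y else if z = π.symm y then π x else π z

/-- Reprogramming of a permutation: `π[x → y] = π ∘ (x  π⁻¹(y))`. -/
def reprog (π : Equiv.Perm X) (x y : X) : Equiv.Perm X :=
  π * Equiv.swap x (π.symm y)

/-- Iterated reprogramming over a list of pairs, applied left to right. -/
def reprogList (π : Equiv.Perm X) (ps : List (X × X)) : Equiv.Perm X :=
  ps.foldl (fun σ p => reprog σ p.1 p.2) π

/-- Iterated reprogramming `π[x₁ → y₁]...[x_k → y_k]` over vectors of pairs. -/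
def reprogVec {k : ℕ} (π : Equiv.Perm X) (x y : Fin k → X) : Equiv.Perm X :=
  (List.finRange k).foldl (fun σ i => reprog σ (x i) (y i)) π

/-- A tuple of pairs `(x i, y i)` is good w.r.t. `π`. -/
def IsGood {k : ℕ} (π : Equiv.Perm X) (x y : Fin k → X) : Prop :=
  Function.Injective x ∧ Function.Injective y ∧ ∀ i j, π (x i) ≠ y j

/-! Two reprogrammings `[x₁ → y₁]` and `[x₂ → y₂]` with `x₁ ≠ x₂` and `y₁ ≠ y₂` commute, as a
pointwise case check shows; a left fold whose steps commute pairwise is invariant under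
permuting the list it folds over. -/

omit [Fintype X] in
theorem reprog_apply (π : Equiv.Perm X) (x y z : X) :
    reprog π x y z = if z = x then y else if π z = y then π x else π z := by
  simp only [reprog, Perm.mul_apply, swap_apply_def, eq_symm_apply]
  split_ifs <;> simp_all

omit [Fintype X] in
theorem reprog_reprog_comm (π : Equiv.Perm X) {x₁ y₁ x₂ y₂ : X} (hx : x₁ ≠ x₂) (hy : y₁ ≠ y₂) :
    reprog (reprog π x₁ y₁) x₂ y₂ = reprog (reprog π x₂ y₂) x₁ y₁ := by
  ext z
  simp only [reprog_apply]
  grind [Equiv.apply_eq_iff_eq]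

/-- For disjoint pairs, iterated reprogramming is order-independent. -/
theorem reprogVec_perm {k : ℕ} (π : Equiv.Perm X) (x y : Fin k → X)
    (hx : Function.Injective x) (hy : Function.Injective y)
    (σ : Equiv.Perm (Fin k)) :
    reprogVec π x y = reprogVec π (x ∘ σ) (y ∘ σ) := by
  have hcomm : ∀ i j (ρ : Equiv.Perm X),
      reprog (reprog ρ (x i) (y i)) (x j) (y j) = reprog (reprog ρ (x j) (y j)) (x i) (y i) := by
    intro i j ρ
    obtain rfl | hij := eq_or_ne i j
    · rfl
    · exact reprog_reprog_comm ρ (hx.ne hij) (hy.ne hij)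
  have hσ : reprogVec π (x ∘ σ) (y ∘ σ) =
      ((List.finRange k).map σ).foldl (fun ρ i => reprog ρ (x i) (y i)) π := by
    simp only [reprogVec, List.foldl_map, Function.comp_apply]
  rw [hσ, reprogVec]
  exact (σ.map_finRange_perm.foldl_eq' (fun i _ j _ ρ => hcomm i j ρ) π).symm
end

section
/- Let π be a permutation of a finite set X and (x₁*, y₁*), ..., (x_k*, y_k*) be a k-tuple of pairs that is good with respect to π. Then the iterated reprogramming satisfies: π[x₁* → y₁*]...[x_k* → y_k*](z) = y_j* if z = x_j* for some j, π[x₁* → y₁*]...[x_k* → y_k*](z) = π(x_j*) if z = π⁻¹(y_j*) for some j, and π[x₁* → y₁*]...[x_k* → y_k*](z) = π(z) otherwise. -/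
open Equiv Finset
open scoped Classical

variable {X : Type*} [DecidableEq X] [Fintype X]

/-!
Goodness makes the transpositions `swap xᵢ (π⁻¹ yᵢ)` of different pairs act on disjoint sets of
points. Inductively, after the first `i` steps the reprogrammed permutation still agrees with `π`
at `xᵢ₊₁` and `π⁻¹ yᵢ₊₁`, so the next step is again `· ∘ swap xᵢ₊₁ (π⁻¹ yᵢ₊₁)` and only changes
the values at those two points.
-/

section

variable {α : Type*}

/-- The transpositions `swap p.1 (π⁻¹ p.2)` and `swap q.1 (π⁻¹ q.2)` have disjoint supports. -/
def ReprogDisjoint (π : Equiv.Perm α) (p q : α × α) : Prop :=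
  p.1 ≠ q.1 ∧ p.1 ≠ π.symm q.2 ∧ π.symm p.2 ≠ q.1 ∧ π.symm p.2 ≠ π.symm q.2

theorem IsGood.pairwise_reprogDisjoint {k : ℕ} {π : Equiv.Perm α} {x y : Fin k → α}
    (h : IsGood π x y) : (List.ofFn fun i => (x i, y i)).Pairwise (ReprogDisjoint π) := by
  obtain ⟨hx, hy, hxy⟩ := h
  exact List.pairwise_ofFn.2 fun i j hij =>
    ⟨hx.ne hij.ne, fun e => hxy i j ((eq_symm_apply π).1 e),
      fun e => hxy j i ((symm_apply_eq π).1 e).symm, π.symm.injective.ne (hy.ne hij.ne)⟩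

variable [DecidableEq α]

theorem reprog_apply_s5 (σ : Equiv.Perm α) (a b z : α) : reprog σ a b z = reprogFun σ a b z := by
  simp only [reprog, reprogFun, Perm.mul_apply, swap_apply_def]
  split_ifs <;> simp_all

theorem reprogList_append_singleton (π : Equiv.Perm α) (ps : List (α × α)) (p : α × α) :
    reprogList π (ps ++ [p]) = reprog (reprogList π ps) p.1 p.2 := by
  simp [reprogList]

theorem reprogVec_eq_reprogList {k : ℕ} (π : Equiv.Perm α) (x y : Fin k → α) :
    reprogVec π x y = reprogList π (List.ofFn fun i => (x i, y i)) := by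
  rw [reprogVec, reprogList, List.ofFn_eq_map, List.foldl_map]

theorem reprogList_spec (π : Equiv.Perm α) (ps : List (α × α))
    (hps : ps.Pairwise (ReprogDisjoint π)) :
    (∀ p ∈ ps, reprogList π ps p.1 = p.2) ∧
    (∀ p ∈ ps, reprogList π ps (π.symm p.2) = π p.1) ∧
    (∀ z, (∀ p ∈ ps, z ≠ p.1 ∧ z ≠ π.symm p.2) → reprogList π ps z = π z) := by
  induction ps using List.reverseRecOn with
  | nil => simp [reprogList]
  | append_singleton ps a ih =>
    obtain ⟨hps, -, hsep⟩ := List.pairwise_append.1 hps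
    replace hsep (p) (hp : p ∈ ps) : ReprogDisjoint π p a := hsep p hp a (List.mem_singleton_self a)
    obtain ⟨ih₁, ih₂, ih₃⟩ := ih hps
    set σ := reprogList π ps
    have hσa : σ a.1 = π a.1 :=
      ih₃ _ fun p hp => ⟨(hsep p hp).1.symm, (hsep p hp).2.2.1.symm⟩
    have hσb : σ.symm a.2 = π.symm a.2 := by
      rw [symm_apply_eq, ih₃ _ fun p hp => ⟨(hsep p hp).2.1.symm, (hsep p hp).2.2.2.symm⟩,
        apply_symm_apply]
    have step (z : α) :
        reprog σ a.1 a.2 z = if z = a.1 then a.2 else if z = π.symm a.2 then π a.1 else σ z := by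
      rw [reprog_apply_s5, reprogFun, hσa, hσb]
    simp only [reprogList_append_singleton, List.mem_append, List.mem_singleton]
    refine ⟨?_, ?_, fun z hz => ?_⟩
    · rintro p (hp | rfl)
      · rw [step, if_neg (hsep p hp).1, if_neg (hsep p hp).2.1, ih₁ p hp]
      · rw [step, if_pos rfl]
    · rintro p (hp | rfl)
      · rw [step, if_neg (hsep p hp).2.2.1, if_neg (hsep p hp).2.2.2, ih₂ p hp]
      · by_cases h : π.symm p.2 = p.1
        · rw [step, if_pos h, ← h, apply_symm_apply]
        · rw [step, if_neg h, if_pos rfl]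
    · obtain ⟨hza, hzb⟩ := hz a (Or.inr rfl)
      rw [step, if_neg hza, if_neg hzb, ih₃ z fun p hp => hz p (Or.inl hp)]

end

/-- Reprogramming on good tuples: full description of
`π[x₁* → y₁*]...[x_k* → y_k*]`. -/
theorem reprogVec_good {k : ℕ} (π : Equiv.Perm X) (x y : Fin k → X)
    (h : IsGood π x y) :
    (∀ j, reprogVec π x y (x j) = y j) ∧
    (∀ j, reprogVec π x y (π.symm (y j)) = π (x j)) ∧
    (∀ z, (∀ j, z ≠ x j ∧ z ≠ π.symm (y j)) → reprogVec π x y z = π z) := by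
  obtain ⟨h₁, h₂, h₃⟩ := reprogList_spec π _ h.pairwise_reprogDisjoint
  have hmem (j : Fin k) : (x j, y j) ∈ List.ofFn fun i => (x i, y i) := List.mem_ofFn.2 ⟨j, rfl⟩
  rw [reprogVec_eq_reprogList]
  refine ⟨fun j => h₁ _ (hmem j), fun j => h₂ _ (hmem j), fun z hz => h₃ z ?_⟩
  rintro p hp
  obtain ⟨i, rfl⟩ := List.mem_ofFn.1 hp
  exact hz i
end

section
/- Let π be a permutation of a finite set X and (x₁*, y₁*), ..., (x_k*, y_k*) a good tuple with respect to π. Then π[x₁* → y₁*]...[x_{k-1}* → y_{k-1}*](x_k*) = π(x_k*); that is, reprogramming on the first k−1 pairs does not change the value of π at x_k*. -/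
open Equiv Finset
open scoped Classical

variable {X : Type*} [DecidableEq X] [Fintype X]

section

variable {α : Type*} [DecidableEq α]

theorem reprog_apply_of_ne (σ : Equiv.Perm α) {a b z : α} (hza : z ≠ a) (hzb : σ z ≠ b) :
    reprog σ a b z = σ z := by
  have hz : z ≠ σ.symm b := fun h => hzb (by rw [h, Equiv.apply_symm_apply])
  rw [reprog, Equiv.Perm.mul_apply, Equiv.swap_apply_of_ne_of_ne hza hz]

theorem foldl_reprog_apply_of_forall_ne {ι : Type*} (a b : ι → α) (l : List ι)
    (σ : Equiv.Perm α) {z : α} (h : ∀ i ∈ l, z ≠ a i ∧ σ z ≠ b i) :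
    l.foldl (fun τ i => reprog τ (a i) (b i)) σ z = σ z := by
  induction l generalizing σ with
  | nil => rfl
  | cons i l ih =>
    obtain ⟨hza, hzb⟩ := h i List.mem_cons_self
    have hσ : reprog σ (a i) (b i) z = σ z := reprog_apply_of_ne σ hza hzb
    rw [List.foldl_cons, ih _ fun j hj => hσ ▸ h j (List.mem_cons_of_mem i hj), hσ]

theorem reprogVec_apply_of_forall_ne {k : ℕ} (σ : Equiv.Perm α) (a b : Fin k → α) {z : α}
    (h : ∀ i, z ≠ a i ∧ σ z ≠ b i) : reprogVec σ a b z = σ z :=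
  foldl_reprog_apply_of_forall_ne a b _ σ fun i _ => h i

end

/-- Reprogramming on the first `k` pairs of a good `(k+1)`-tuple does not change
the value of `π` at the last input `x (Fin.last k)`. -/
theorem reprogVec_init_apply_last {k : ℕ} (π : Equiv.Perm X)
    (x y : Fin (k + 1) → X) (h : IsGood π x y) :
    reprogVec π (x ∘ Fin.castSucc) (y ∘ Fin.castSucc) (x (Fin.last k))
      = π (x (Fin.last k)) := by
  obtain ⟨hx, -, hπ⟩ := h
  refine reprogVec_apply_of_forall_ne π _ _ fun i => ⟨?_, hπ _ _⟩
  exact hx.ne (Fin.castSucc_lt_last i).ne'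
end

section
/- Let x₁*, ..., x_k* ∈ X be pairwise distinct and let G[x⃗*] denote the set of pairs of permutations (π, π*) of X such that the tuple ((x₁*, π*(x₁*)), ..., (x_k*, π*(x_k*))) is good w.r.t. π. If (π, π*) is drawn uniformly from G[x⃗*] and y_j* := π*(x_j*), then the reprogrammed permutation π[x₁* → y₁*]...[x_k* → y_k*] is uniformly distributed over all permutations of X. -/
open Equiv Finset
open scoped Classical

variable {X : Type*} [DecidableEq X] [Fintype X]

/-! Left multiplication by `σ` on both components maps `G[x⃗*]` to itself and turns the
reprogrammed permutation `τ` into `σ τ`; with `σ = τ₂ τ₁⁻¹` it is a bijection between the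
fibres over `τ₁` and `τ₂`. -/

section LeftTranslation

variable {α : Type*}

theorem isGood_mul_left_iff {k : ℕ} (σ π : Equiv.Perm α) (x y : Fin k → α) :
    IsGood (σ * π) x (fun i => σ (y i)) ↔ IsGood π x y := by
  simp only [IsGood, Equiv.Perm.mul_apply, ne_eq, EmbeddingLike.apply_eq_iff_eq]
  exact and_congr_right fun _ => and_congr_left fun _ => σ.injective.of_comp_iff y

variable [DecidableEq α]

theorem reprog_mul_left (σ π : Equiv.Perm α) (x y : α) :
    reprog (σ * π) x (σ y) = σ * reprog π x y := by
  have hpre : (σ * π).symm (σ y) = π.symm y := by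
    rw [Equiv.symm_apply_eq, Equiv.Perm.mul_apply, Equiv.apply_symm_apply]
  rw [reprog, reprog, hpre, mul_assoc]

theorem foldl_reprog_mul_left {ι : Type*} (σ : Equiv.Perm α) (x y : ι → α) (l : List ι)
    (π : Equiv.Perm α) :
    l.foldl (fun s i => reprog s (x i) (σ (y i))) (σ * π)
      = σ * l.foldl (fun s i => reprog s (x i) (y i)) π := by
  induction l generalizing π with
  | nil => rfl
  | cons i l ih => simp only [List.foldl_cons, reprog_mul_left, ih]

theorem reprogVec_mul_left {k : ℕ} (σ π : Equiv.Perm α) (x y : Fin k → α) :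
    reprogVec (σ * π) x (fun i => σ (y i)) = σ * reprogVec π x y :=
  foldl_reprog_mul_left σ x y _ π

end LeftTranslation

/-- The fibre over `τ` of the reprogramming map on `G[x⃗*]`. -/
noncomputable def reprogFiber {k : ℕ} (x : Fin k → X) (τ : Equiv.Perm X) :
    Finset (Equiv.Perm X × Equiv.Perm X) :=
  Finset.univ.filter fun p =>
    IsGood p.1 x (fun j => p.2 (x j)) ∧ reprogVec p.1 x (fun j => p.2 (x j)) = τ

theorem mem_reprogFiber_mul_left_iff {k : ℕ} (x : Fin k → X) (σ τ : Equiv.Perm X)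
    (p : Equiv.Perm X × Equiv.Perm X) :
    (σ * p.1, σ * p.2) ∈ reprogFiber x (σ * τ) ↔ p ∈ reprogFiber x τ := by
  simp only [reprogFiber, Finset.mem_filter, Finset.mem_univ, true_and, Equiv.Perm.mul_apply,
    isGood_mul_left_iff, reprogVec_mul_left, mul_right_inj]

theorem card_reprogFiber_mul_left {k : ℕ} (x : Fin k → X) (σ τ : Equiv.Perm X) :
    (reprogFiber x τ).card = (reprogFiber x (σ * τ)).card :=
  Finset.card_equiv ((Equiv.mulLeft σ).prodCongr (Equiv.mulLeft σ))
    fun p => (mem_reprogFiber_mul_left_iff x σ τ p).symm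

theorem reprogVec_uniform_general {k : ℕ} (x : Fin k → X)
    (τ₁ τ₂ : Equiv.Perm X) :
    (Finset.univ.filter (fun p : Equiv.Perm X × Equiv.Perm X =>
        IsGood p.1 x (fun j => p.2 (x j)) ∧
          reprogVec p.1 x (fun j => p.2 (x j)) = τ₁)).card
      = (Finset.univ.filter (fun p : Equiv.Perm X × Equiv.Perm X =>
        IsGood p.1 x (fun j => p.2 (x j)) ∧
          reprogVec p.1 x (fun j => p.2 (x j)) = τ₂)).card := by
  have h := card_reprogFiber_mul_left x (τ₂ * τ₁⁻¹) τ₁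
  rwa [inv_mul_cancel_right] at h

/-- Uniformity of the reprogrammed permutation: when `(π, π*)` is drawn uniformly
from the good pairs `G[x⃗*]`, the permutation `π[x₁* → π*(x₁*)]...[x_k* → π*(x_k*)]`
is uniformly distributed: every target permutation is attained equally often. -/
theorem reprogVec_uniform {k : ℕ} (x : Fin k → X) (hx : Function.Injective x)
    (τ₁ τ₂ : Equiv.Perm X) :
    (Finset.univ.filter (fun p : Equiv.Perm X × Equiv.Perm X =>
        IsGood p.1 x (fun j => p.2 (x j)) ∧
          reprogVec p.1 x (fun j => p.2 (x j)) = τ₁)).card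
      = (Finset.univ.filter (fun p : Equiv.Perm X × Equiv.Perm X =>
        IsGood p.1 x (fun j => p.2 (x j)) ∧
          reprogVec p.1 x (fun j => p.2 (x j)) = τ₂)).card :=
  reprogVec_uniform_general x τ₁ τ₂
end

section
/- Let N ≥ 1 and let c_1 ≥ 0 and suppose N < 2^c. Then 1 − ∏_{i=1}^{N} ((1 − (i+1)/2^c) / (1 − i/(2^r · 2^c))) ≤ N(N+1)/2^c, for any nonnegative integers r, c such that all factors in the product are nonnegative. In particular, 1 − (1 − (N+1)/2^c)^N ≤ N(N+1)/2^c. -/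
/-!
Each factor of the product is at least `1 - (N+1)/2^c`: its numerator is, and its denominator
lies in `(0, 1]`. Hence the product is at least `(1 - (N+1)/2^c)^N`, which Bernoulli's
inequality bounds below by `1 - N(N+1)/2^c`.
-/

open Finset

theorem one_sub_mul_le_one_sub_pow {t : ℝ} (ht : t ≤ 2) (n : ℕ) : 1 - n * t ≤ (1 - t) ^ n := by
  simpa only [sub_eq_add_neg, mul_neg] using one_add_mul_le_pow (a := -t) (by linarith) n

theorem one_sub_div_le_factor {q s : ℝ} {i N : ℕ} (hq : (N : ℝ) + 1 ≤ q) (hs : 1 ≤ s)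
    (hiN : i ≤ N) : 1 - ((N : ℝ) + 1) / q ≤ (1 - ((i : ℝ) + 1) / q) / (1 - i / (s * q)) := by
  have hq₀ : 0 < q := by linarith [N.cast_nonneg (α := ℝ)]
  have hi : (i : ℝ) ≤ N := by exact_mod_cast hiN
  have hnum : 1 - ((N : ℝ) + 1) / q ≤ 1 - ((i : ℝ) + 1) / q := by gcongr
  have hnum₀ : 0 ≤ 1 - ((i : ℝ) + 1) / q := by
    rw [sub_nonneg, div_le_one hq₀]; linarith
  have hden₀ : 0 < 1 - (i : ℝ) / (s * q) := by
    rw [sub_pos, div_lt_one (by positivity)]; nlinarith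
  have hden₁ : 1 - (i : ℝ) / (s * q) ≤ 1 := sub_le_self _ (by positivity)
  exact hnum.trans (le_div_self hnum₀ hden₀ hden₁)

theorem one_sub_div_pow_le_prod {q s : ℝ} {N : ℕ} (hq : (N : ℝ) + 1 ≤ q) (hs : 1 ≤ s) :
    (1 - ((N : ℝ) + 1) / q) ^ N ≤
      ∏ i ∈ Icc 1 N, (1 - ((i : ℝ) + 1) / q) / (1 - i / (s * q)) := by
  have hq₀ : 0 < q := by linarith [N.cast_nonneg (α := ℝ)]
  have hbase : 0 ≤ 1 - ((N : ℝ) + 1) / q := by rw [sub_nonneg, div_le_one hq₀]; exact hq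
  calc (1 - ((N : ℝ) + 1) / q) ^ N = ∏ _i ∈ Icc 1 N, (1 - ((N : ℝ) + 1) / q) := by simp
    _ ≤ _ := prod_le_prod (fun _ _ => hbase)
        fun i hi => one_sub_div_le_factor hq hs (mem_Icc.mp hi).2

theorem sponge_bound_general (N r c : ℕ) (hNc : N < 2 ^ c) :
    (1 - ∏ i ∈ Finset.Icc 1 N,
        ((1 - ((i : ℝ) + 1) / 2 ^ c) / (1 - (i : ℝ) / (2 ^ r * 2 ^ c)))
      ≤ (N : ℝ) * ((N : ℝ) + 1) / 2 ^ c) ∧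
    (1 - (1 - ((N : ℝ) + 1) / 2 ^ c) ^ N ≤ (N : ℝ) * ((N : ℝ) + 1) / 2 ^ c) := by
  have hq : (N : ℝ) + 1 ≤ 2 ^ c := by exact_mod_cast hNc
  have ht : ((N : ℝ) + 1) / 2 ^ c ≤ 2 :=
    ((div_le_one (by positivity)).2 hq).trans one_le_two
  have bernoulli := one_sub_mul_le_one_sub_pow ht N
  rw [← mul_div_assoc] at bernoulli
  have hprod := one_sub_div_pow_le_prod (N := N) hq (one_le_pow₀ (M₀ := ℝ) (n := r) one_le_two)
  constructor <;> linarith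

/-- The indifferentiability bound simplification: for `1 ≤ N < 2^c`,
`1 − ∏_{i=1}^{N} ((1 − (i+1)/2^c)/(1 − i/(2^r·2^c))) ≤ N(N+1)/2^c`, and in
particular `1 − (1 − (N+1)/2^c)^N ≤ N(N+1)/2^c`. -/
theorem sponge_bound (N r c : ℕ) (hN : 1 ≤ N) (hNc : N < 2 ^ c) :
    (1 - ∏ i ∈ Finset.Icc 1 N,
        ((1 - ((i : ℝ) + 1) / 2 ^ c) / (1 - (i : ℝ) / (2 ^ r * 2 ^ c)))
      ≤ (N : ℝ) * ((N : ℝ) + 1) / 2 ^ c) ∧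
    (1 - (1 - ((N : ℝ) + 1) / 2 ^ c) ^ N ≤ (N : ℝ) * ((N : ℝ) + 1) / 2 ^ c) :=
  sponge_bound_general N r c hNc
end
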